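/- arXiv:2403.00697 — 6 statements merged into one kernel-verified Lean document; each statement's English description precedes it below -/
import Mathlib

section
/- Let V be a finite-dimensional real vector space with V = U ⊕ W where dim U = dim W ≥ 2, and let F ∈ Λ²V* satisfy F ∈ U* ∧ W* (i.e. F vanishes on U×U and W×W). Then there exists a nondegenerate symmetric bilinear form g on V of neutral signature such that U and W are totally isotropic for g and the induced scalar product on Λ²V* satisfies g(F,F) = 0. -/
/-!
Pick bases `u` of `U` and `w` of `W`, and let `g` be the hyperbolic form with
`g (u i) (w j) = δᵢⱼ` for which `U` and `W` are isotropic. Since `F` pairs `U` only with `W`,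
`F^♯` preserves `U` and `W`, and `tr (F^♯)² = 2 ∑ᵢⱼ F(uᵢ, wⱼ) F(uⱼ, wᵢ) = 2 tr (T ∘ e)²`, where `T`
encodes `F` on `U × W` and `e` is the change from a fixed basis of `U` to `u`. So it is enough
that every endomorphism `T` of a space of dimension `≥ 2` has `tr (T ∘ e)² = 0` for some
automorphism `e`: if `T` is invertible, take `e = T⁻¹ S` for an invertible `S` with `tr S² = 0`;
otherwise choose `e` making `T ∘ e` a shift of a basis, hence nilpotent.
-/

open Module LinearMap

section TraceOfSquare

variable {R M ι : Type*} [CommRing R] [AddCommGroup M] [Module R M] [Fintype ι] [DecidableEq ι]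

theorem trace_comp_self_eq_sum (b : Basis ι R M) (S : M →ₗ[R] M) :
    trace R M (S ∘ₗ S) = ∑ i, ∑ j, b.repr (S (b i)) j * b.repr (S (b j)) i := by
  rw [trace_eq_matrix_trace R b, toMatrix_comp b b b, Matrix.trace, Finset.sum_comm]
  simp only [Matrix.diag_apply, Matrix.mul_apply, toMatrix_apply]

theorem trace_comp_self_eq_zero_of_repr_lt (b : Basis ι R M) (S : M →ₗ[R] M) (h : ι → ℕ)
    (hS : ∀ i j, b.repr (S (b i)) j ≠ 0 → h j < h i) : trace R M (S ∘ₗ S) = 0 := by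
  rw [trace_comp_self_eq_sum b]
  refine Finset.sum_eq_zero fun i _ => Finset.sum_eq_zero fun j _ => ?_
  by_cases hi : b.repr (S (b i)) j = 0
  · rw [hi, zero_mul]
  by_cases hj : b.repr (S (b j)) i = 0
  · rw [hj, mul_zero]
  exact ((hS i j hi).asymm (hS j i hj)).elim

end TraceOfSquare

section Endomorphisms

variable {K E : Type*} [Field K] [AddCommGroup E] [Module K E] [FiniteDimensional K E]

theorem exists_linearEquiv_trace_comp_self_eq_zero [CharZero K] (h2 : 2 ≤ finrank K E) :
    ∃ S : E ≃ₗ[K] E, trace K E ((S : E →ₗ[K] E) ∘ₗ (S : E →ₗ[K] E)) = 0 := by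
  obtain ⟨m, hm⟩ : ∃ m, finrank K E = 2 + m := ⟨_, (Nat.add_sub_cancel' h2).symm⟩
  let b := (finBasisOfFinrankEq K E hm).reindex finSumFinEquiv.symm
  -- `tr (B * B) = -m` cancels the trace of the identity block, and `det B = (m + 1) / 2`
  let B : Matrix (Fin 2) (Fin 2) K := !![1, 1; -(m + 1) / 2, 0]
  let M : Matrix (Fin 2 ⊕ Fin m) (Fin 2 ⊕ Fin m) K := Matrix.fromBlocks B 0 0 1
  have hM : IsUnit M.det := by
    simp only [M, B, Matrix.det_fromBlocks_zero₂₁, Matrix.det_fin_two_of, Matrix.det_one, mul_one]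
    rw [show (1 : K) * 0 - 1 * (-(m + 1) / 2) = (m + 1) / 2 by ring]
    exact isUnit_iff_ne_zero.mpr (div_ne_zero (Nat.cast_add_one_ne_zero (R := K) m) two_ne_zero)
  refine ⟨Matrix.toLinearEquiv b M hM, ?_⟩
  have hS : (Matrix.toLinearEquiv b M hM : E →ₗ[K] E) = Matrix.toLin b b M := rfl
  rw [trace_eq_matrix_trace K b, hS, ← Matrix.toLin_mul, toMatrix_toLin]
  have hMM : M * M = Matrix.fromBlocks (B * B) 0 0 1 := by
    simp only [M, Matrix.fromBlocks_multiply, Matrix.mul_zero, Matrix.zero_mul, add_zero, zero_add,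
      Matrix.mul_one]
  rw [hMM, Matrix.trace, Fintype.sum_sum_type]
  simp only [Matrix.diag_apply, Matrix.fromBlocks_apply₁₁, Matrix.fromBlocks_apply₂₂,
    Matrix.one_apply_eq, Finset.sum_const, Finset.card_univ, Fintype.card_fin, nsmul_eq_mul,
    mul_one, Fin.sum_univ_two, B, Matrix.mul_fin_two, Matrix.of_apply, Matrix.cons_val',
    Matrix.cons_val_zero, Matrix.cons_val_one, Matrix.cons_val_fin_one]
  ring

-- With `e (b' m) = b m`, the map `T ∘ e` sends `b' m` to `0` or to `b' (m - dim ker T)`, so it is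
-- nilpotent.
theorem exists_trace_sq_comp_linearEquiv_eq_zero_of_ker_ne_bot (T : E →ₗ[K] E) (hT : ker T ≠ ⊥) :
    ∃ e : E ≃ₗ[K] E, trace K E ((T ∘ₗ (e : E →ₗ[K] E)) ∘ₗ (T ∘ₗ (e : E →ₗ[K] E))) = 0 := by
  obtain ⟨C, hC⟩ := (ker T).exists_isCompl
  have hk : 0 < finrank K (ker T) := Nat.pos_of_ne_zero (hT ∘ Submodule.finrank_eq_zero.mp)
  have hkr : finrank K (ker T) + finrank K C = finrank K E := Submodule.finrank_add_eq_of_isCompl hC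
  let bC := finBasis K C
  have hli : LinearIndependent K (fun j => T (bC j)) :=
    bC.linearIndependent.map' (T ∘ₗ C.subtype) (by
      rw [ker_comp, ← Submodule.disjoint_iff_comap_eq_bot]; exact hC.symm.disjoint)
  obtain ⟨D, hD⟩ := (Submodule.span K (Set.range fun j => T (bC j))).exists_isCompl
  have hrd := Submodule.finrank_add_eq_of_isCompl hD
  rw [finrank_span_eq_card hli, Fintype.card_fin] at hrd
  set σ := finSumFinEquiv.trans (finCongr hkr)
  set σ' := finSumFinEquiv.trans (finCongr hrd)
  let b := (((finBasis K (ker T)).prod bC).map (Submodule.prodEquivOfIsCompl _ _ hC)).reindex σ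
  let b' :=
    (((Basis.span hli).prod (finBasis K D)).map (Submodule.prodEquivOfIsCompl _ _ hD)).reindex σ'
  have hbl : ∀ i, T (b (σ (.inl i))) = 0 := by simp [b, Basis.prod_apply]
  have hbr : ∀ j, T (b (σ (.inr j))) = b' (σ' (.inl j)) := by
    simp [b, b', Basis.prod_apply, Basis.span_apply]
  refine ⟨b'.equiv b (Equiv.refl _),
    trace_comp_self_eq_zero_of_repr_lt b' _ Fin.val fun m j hj => ?_⟩
  obtain ⟨x | x, rfl⟩ := σ.surjective m
  · simp only [coe_comp, LinearEquiv.coe_coe, Function.comp_apply, Basis.equiv_apply,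
      Equiv.refl_apply, hbl, map_zero, Finsupp.coe_zero, Pi.zero_apply, ne_eq, not_true] at hj
  · simp only [coe_comp, LinearEquiv.coe_coe, Function.comp_apply, Basis.equiv_apply,
      Equiv.refl_apply, hbr, Basis.repr_self, Finsupp.single_apply, ne_eq, ite_eq_right_iff,
      one_ne_zero, imp_false, not_not] at hj
    subst hj
    simp [σ, σ', hk]

theorem exists_trace_sq_comp_linearEquiv_eq_zero [CharZero K] (h2 : 2 ≤ finrank K E)
    (T : E →ₗ[K] E) :
    ∃ e : E ≃ₗ[K] E, trace K E ((T ∘ₗ (e : E →ₗ[K] E)) ∘ₗ (T ∘ₗ (e : E →ₗ[K] E))) = 0 := by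
  by_cases hT : ker T = ⊥
  · obtain ⟨S, hS⟩ := exists_linearEquiv_trace_comp_self_eq_zero h2
    let Te := LinearEquiv.ofInjectiveEndo T (ker_eq_bot.mp hT)
    have hTS : T ∘ₗ (S.trans Te.symm : E →ₗ[K] E) = S := by
      ext v
      exact Te.apply_symm_apply (S v)
    exact ⟨S.trans Te.symm, hTS ▸ hS⟩
  · exact exists_trace_sq_comp_linearEquiv_eq_zero_of_ker_ne_bot T hT

theorem exists_basis_sum_mul_eq_zero [CharZero K] {ι U W : Type*} [Fintype ι] [DecidableEq ι]
    [AddCommGroup U] [Module K U] [AddCommGroup W] [Module K W] (B : U →ₗ[K] W →ₗ[K] K)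
    (bU : Basis ι K U) (bW : Basis ι K W) (h2 : 2 ≤ finrank K U) :
    ∃ bU' : Basis ι K U, ∑ i, ∑ j, B (bU' i) (bW j) * B (bU' j) (bW i) = 0 := by
  have := Module.Finite.of_basis bU
  let T : U →ₗ[K] U := bU.equivFun.symm.toLinearMap ∘ₗ LinearMap.pi fun j => B.flip (bW j)
  have hT : ∀ u j, bU.repr (T u) j = B u (bW j) := fun u j => by
    rw [← bU.equivFun_apply]
    simp only [T, coe_comp, LinearEquiv.coe_coe, Function.comp_apply, LinearEquiv.apply_symm_apply,
      pi_apply, flip_apply]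
  obtain ⟨e, he⟩ := exists_trace_sq_comp_linearEquiv_eq_zero h2 T
  refine ⟨bU.map e, ?_⟩
  rw [trace_comp_self_eq_sum bU] at he
  simpa [hT] using he

end Endomorphisms

section HyperbolicForm

variable {R M ι : Type*} [CommRing R] [AddCommGroup M] [Module R M] [Fintype ι]

noncomputable def hyperbolicForm (c : Basis (ι ⊕ ι) R M) : M →ₗ[R] M →ₗ[R] R :=
  ∑ x, (c.coord x).smulRight (c.coord x.swap)

variable (c : Basis (ι ⊕ ι) R M)

theorem hyperbolicForm_apply (v w : M) :
    hyperbolicForm c v w = ∑ x, c.repr v x * c.repr w x.swap := by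
  simp [hyperbolicForm]

theorem hyperbolicForm_apply_basis_right (v : M) (y : ι ⊕ ι) :
    hyperbolicForm c v (c y) = c.repr v y.swap := by
  classical
  rw [hyperbolicForm_apply, ← (Equiv.sumComm ι ι).sum_comp]
  simp [Finsupp.single_apply]

theorem hyperbolicForm_apply_basis [DecidableEq ι] (x y : ι ⊕ ι) :
    hyperbolicForm c (c x) (c y) = if x = y.swap then 1 else 0 := by
  rw [hyperbolicForm_apply_basis_right, Basis.repr_self, Finsupp.single_apply]

theorem hyperbolicForm_comm (v w : M) : hyperbolicForm c v w = hyperbolicForm c w v := by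
  rw [hyperbolicForm_apply, hyperbolicForm_apply, ← (Equiv.sumComm ι ι).sum_comp]
  simp [mul_comm]

theorem eq_zero_of_hyperbolicForm_eq_zero {v : M} (hv : ∀ w, hyperbolicForm c v w = 0) : v = 0 :=
  c.ext_elem fun x => by simpa [hyperbolicForm_apply_basis_right] using hv (c x.swap)

end HyperbolicForm

theorem forall_mem_apply_eq_zero_of_basis {R M κ : Type*} [CommRing R] [AddCommGroup M]
    [Module R M] {B : M →ₗ[R] M →ₗ[R] R} {P : Submodule R M} (b : Basis κ R P)
    (hb : ∀ i j, B (b i) (b j) = 0) : ∀ u ∈ P, ∀ u' ∈ P, B u u' = 0 := by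
  have h : B.compl₁₂ P.subtype P.subtype = 0 := b.ext fun i => b.ext fun j => hb i j
  exact fun u hu u' hu' => congr($h ⟨u, hu⟩ ⟨u', hu'⟩)

theorem exists_orthogonal_basis_hyperbolicForm {K V : Type*} [Field K] [NeZero (2 : K)]
    [AddCommGroup V] [Module K V] {n : ℕ} (c : Basis (Fin n ⊕ Fin n) K V) :
    ∃ b : Basis (Fin (2 * n)) K V, ∀ i j,
      hyperbolicForm c (b i) (b j) = if j = i then (if (i : ℕ) < n then 1 else -1) else 0 := by
  let v : Fin n ⊕ Fin n → V := Sum.elim (fun i => c (.inl i) + (2 : K)⁻¹ • c (.inr i))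
    (fun i => c (.inl i) - (2 : K)⁻¹ • c (.inr i))
  have hv : ∀ x y, hyperbolicForm c (v x) (v y) =
      if y = x then Sum.elim (fun _ => 1) (fun _ => -1) x else 0 := by
    have half : (2 : K)⁻¹ + 2⁻¹ = 1 := by rw [← one_div, add_halves]
    rintro (i | i) (j | j) <;> rcases eq_or_ne j i with rfl | hij <;>
      simp [v, hyperbolicForm_apply_basis, neg_sub_left, *, Ne.symm]
  let ρ : Fin n ⊕ Fin n ≃ Fin (2 * n) := finSumFinEquiv.trans (finCongr (two_mul n).symm)
  have hw : ∀ i j, hyperbolicForm c (v (ρ.symm i)) (v (ρ.symm j)) =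
      if j = i then (if (i : ℕ) < n then 1 else -1) else 0 := by
    intro i j
    obtain ⟨x, rfl⟩ := ρ.surjective i
    obtain ⟨y, rfl⟩ := ρ.surjective j
    rw [ρ.symm_apply_apply, ρ.symm_apply_apply, hv]
    simp only [ρ.injective.eq_iff]
    rcases x with x | x <;> simp [ρ]
  have hli : LinearIndependent K (v ∘ ρ.symm) :=
    BilinForm.linearIndependent_of_iIsOrtho (B := hyperbolicForm c)
      (BilinForm.iIsOrtho_def.mpr fun i j hij => (hw i j).trans (if_neg hij.symm))
      (fun i => by rw [Function.comp_apply, hw, if_pos rfl]; split_ifs <;> simp)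
  have : FiniteDimensional K V := .of_basis c
  have hcard : Fintype.card (Fin (2 * n)) = finrank K V := by
    rw [finrank_eq_card_basis c]; simp [two_mul]
  exact ⟨basisOfLinearIndependentOfCardEqFinrank' _ hli hcard, by simpa using hw⟩

theorem trace_comp_self_of_hyperbolicForm {R M ι : Type*} [CommRing R] [AddCommGroup M]
    [Module R M] [Fintype ι] [DecidableEq ι] (c : Basis (ι ⊕ ι) R M) {F : M →ₗ[R] M →ₗ[R] R}
    (hF : F.IsAlt) (hl : ∀ i j, F (c (.inl i)) (c (.inl j)) = 0)
    (hr : ∀ i j, F (c (.inr i)) (c (.inr j)) = 0) {φ : M →ₗ[R] M}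
    (hφ : ∀ v w, hyperbolicForm c (φ v) w = F v w) :
    trace R M (φ ∘ₗ φ) =
      2 * ∑ i, ∑ j, F (c (.inl i)) (c (.inr j)) * F (c (.inl j)) (c (.inr i)) := by
  have hrepr : ∀ v y, c.repr (φ v) y = F v (c y.swap) := fun v y => by
    rw [← hφ, hyperbolicForm_apply_basis_right, Sum.swap_swap]
  have hrl : ∀ i j, F (c (.inr i)) (c (.inl j)) = -F (c (.inl j)) (c (.inr i)) :=
    fun i j => (hF.neg _ _).symm
  rw [trace_comp_self_eq_sum c]
  simp only [hrepr, Fintype.sum_sum_type, Sum.swap_inl, Sum.swap_inr, hl, hr, hrl, mul_zero,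
    Finset.sum_const_zero, add_zero, zero_add, neg_mul_neg]
  rw [two_mul]
  congr 1
  simp only [mul_comm]

/-- If `V = U ⊕ W` with `dim U = dim W ≥ 2` and `F` is a 2-form lying in
`U* ∧ W*`, then there is a nondegenerate symmetric bilinear form `g` on `V` of neutral
signature for which `U` and `W` are totally isotropic and `g(F,F) = Tr((F^♯)²) = 0`. -/
theorem stmt_0 (V : Type*) [AddCommGroup V] [Module ℝ V] [FiniteDimensional ℝ V]
    (U W : Submodule ℝ V) (hcompl : IsCompl U W)
    (hdim : Module.finrank ℝ U = Module.finrank ℝ W) (h2 : 2 ≤ Module.finrank ℝ U)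
    (F : V →ₗ[ℝ] V →ₗ[ℝ] ℝ) (halt : ∀ v, F v v = 0)
    (hFU : ∀ u ∈ U, ∀ u' ∈ U, F u u' = 0) (hFW : ∀ w ∈ W, ∀ w' ∈ W, F w w' = 0) :
    ∃ g : V →ₗ[ℝ] V →ₗ[ℝ] ℝ,
      -- symmetric
      (∀ x y, g x y = g y x) ∧
      -- nondegenerate
      (∀ x, (∀ y, g x y = 0) → x = 0) ∧
      -- neutral signature: an orthogonal basis with as many `+1`'s as `-1`'s
      (∃ p : ℕ, ∃ b : Module.Basis (Fin (2 * p)) ℝ V,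
        ∀ i j, g (b i) (b j) = if j = i then (if (i : ℕ) < p then 1 else -1) else 0) ∧
      -- U and W totally isotropic
      (∀ u ∈ U, ∀ u' ∈ U, g u u' = 0) ∧ (∀ w ∈ W, ∀ w' ∈ W, g w w' = 0) ∧
      -- g(F,F) = Tr((F^♯)²) = 0, where F^♯ is characterized by g(F^♯ v, v') = F(v, v')
      (∀ φ : V →ₗ[ℝ] V, (∀ v v', g (φ v) v' = F v v') →
        LinearMap.trace ℝ V (φ ∘ₗ φ) = 0) := by
  let bW := (finBasis ℝ W).reindex (finCongr hdim.symm)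
  obtain ⟨bU, hbU⟩ :=
    exists_basis_sum_mul_eq_zero (F.compl₁₂ U.subtype W.subtype) (finBasis ℝ U) bW h2
  let c := (bU.prod bW).map (Submodule.prodEquivOfIsCompl U W hcompl)
  have hcl : ∀ i, c (.inl i) = bU i := by simp [c, Basis.prod_apply]
  have hcr : ∀ j, c (.inr j) = bW j := by simp [c, Basis.prod_apply]
  refine ⟨hyperbolicForm c, hyperbolicForm_comm c, fun x => eq_zero_of_hyperbolicForm_eq_zero c,
    ⟨_, exists_orthogonal_basis_hyperbolicForm c⟩,
    forall_mem_apply_eq_zero_of_basis bU fun i j => ?_,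
    forall_mem_apply_eq_zero_of_basis bW fun i j => ?_, fun φ hφ => ?_⟩
  · simp [← hcl, hyperbolicForm_apply_basis]
  · simp [← hcr, hyperbolicForm_apply_basis]
  · rw [trace_comp_self_of_hyperbolicForm c halt
      (fun i j => by simpa [hcl] using hFU _ (bU i).2 _ (bU j).2)
      (fun i j => by simpa [hcr] using hFW _ (bW i).2 _ (bW j).2) hφ]
    simpa [hcl, hcr] using hbU
end

section
/- Let w₁,…,wₙ be a sequence of elements of a torsion-free abelian group A with 0 < w₁ ≤ ⋯ ≤ wₙ (for A = ℤ say). Suppose indices i,j,k,h in {1,…,n} satisfy w_i + w_j ≤ w_k and w_{n+1-i} + w_{n+1-j} ≤ w_h, and suppose w_m + w_{n+1-m} ≥ wₙ for all m. Then w_k + w_h = 2wₙ; in particular if additionally w_m + w_{n+1-m} > w_{n-1} for all m, then k = h = n and wₙ = w_i + w_{n+1-i} = w_j + w_{n+1-j}, w_{n+1-i} = w_j, w_{n+1-j} = w_i. -/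
/-! Summing the two hypotheses and using (F2) twice squeezes
`(w_i + w_î) + (w_j + w_ĵ) ≤ w_k + w_h ≤ 2 wₙ ≤ (w_i + w_î) + (w_j + w_ĵ)`,
so every inequality in the chain is an equality. The remaining identities follow by
cancellation, and (F1) then forces `w_k = wₙ > w_{n-1}`, so `k = n`, and likewise `h = n`. -/

section OrderedCancelAddMonoid

variable {α : Type*} [AddCommMonoid α] [PartialOrder α] [IsOrderedCancelAddMonoid α]

theorem eq_and_eq_of_add_eq_of_add_le {a b c d t : α} (hac : a + c = t) (hbd : b + d = t)
    (hab : a + b ≤ t) (hcd : c + d ≤ t) : c = b ∧ d = a := by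
  have hbc : b ≤ c := le_of_add_le_add_left (hab.trans hac.ge)
  have hcb : c ≤ b := le_of_add_le_add_right (hcd.trans hbd.ge)
  have had : a ≤ d := le_of_add_le_add_left ((add_comm a b ▸ hab).trans hbd.ge)
  have hda : d ≤ a := le_of_add_le_add_right ((add_comm c d ▸ hcd).trans hac.ge)
  exact ⟨le_antisymm hcb hbc, le_antisymm hda had⟩

theorem apply_eq_last_and_add_rev_eq_last {n : ℕ} {w : Fin (n + 1) → α} (hw : Monotone w)
    (hF2 : ∀ m, w (Fin.last n) ≤ w m + w m.rev) {i j k h : Fin (n + 1)}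
    (hij : w i + w j ≤ w k) (hrev : w i.rev + w j.rev ≤ w h) :
    (w k = w (Fin.last n) ∧ w h = w (Fin.last n)) ∧
      (w i + w i.rev = w (Fin.last n) ∧ w j + w j.rev = w (Fin.last n)) := by
  have hkh : w k + w h ≤ w (Fin.last n) + w (Fin.last n) :=
    add_le_add (hw k.le_last) (hw h.le_last)
  have hsum : w (Fin.last n) + w (Fin.last n) ≤ (w i + w i.rev) + (w j + w j.rev) :=
    add_le_add (hF2 i) (hF2 j)
  have hpair : (w i + w i.rev) + (w j + w j.rev) ≤ w k + w h := by
    rw [add_add_add_comm]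
    exact add_le_add hij hrev
  exact ⟨(add_eq_add_iff_eq_and_eq (hw k.le_last) (hw h.le_last)).1
      (le_antisymm hkh (hsum.trans hpair)),
    ((add_eq_add_iff_eq_and_eq (hF2 i) (hF2 j)).1
      (le_antisymm hsum (hpair.trans hkh))).imp Eq.symm Eq.symm⟩

end OrderedCancelAddMonoid

theorem Monotone.eq_last_of_apply_castSucc_last_lt {β : Type*} [Preorder β] {n : ℕ}
    {w : Fin (n + 2) → β} (hw : Monotone w) {k : Fin (n + 2)}
    (hk : w (Fin.last n).castSucc < w k) : k = Fin.last (n + 1) := by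
  by_contra hne
  obtain ⟨j, rfl⟩ := Fin.exists_castSucc_eq.2 hne
  exact hk.not_ge (hw (Fin.castSucc_le_castSucc_iff.2 j.le_last))

/-- For a nondecreasing positive sequence `w₁,…,wₙ` (here `n = N+2`)
satisfying (F2) `w_m + w_m̂ ≥ wₙ` for all `m` (`m̂ = n+1−m`, i.e. `Fin.rev`), if
`w_i + w_j ≤ w_k` and `w_î + w_ĵ ≤ w_h`, then `w_k + w_h = 2wₙ`; if moreover
`w_m + w_m̂ > w_{n−1}` for all `m`, then `k = h = n`,
`wₙ = w_i + w_î = w_j + w_ĵ`, `w_î = w_j` and `w_ĵ = w_i`. -/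
theorem stmt_12 (N : ℕ) (w : Fin (N + 2) → ℤ)
    (hmono : Monotone w)
    (hF2 : ∀ m : Fin (N + 2), w (Fin.last (N + 1)) ≤ w m + w m.rev)
    (i j k h : Fin (N + 2))
    (hij : w i + w j ≤ w k) (hrev : w i.rev + w j.rev ≤ w h) :
    w k + w h = 2 * w (Fin.last (N + 1)) ∧
    ((∀ m : Fin (N + 2), w ⟨N, by omega⟩ < w m + w m.rev) →
      k = Fin.last (N + 1) ∧ h = Fin.last (N + 1) ∧
      w (Fin.last (N + 1)) = w i + w i.rev ∧
      w (Fin.last (N + 1)) = w j + w j.rev ∧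
      w i.rev = w j ∧ w j.rev = w i) := by
  obtain ⟨⟨hk, hh⟩, hi, hj⟩ := apply_eq_last_and_add_rev_eq_last hmono hF2 hij hrev
  refine ⟨by rw [hk, hh, two_mul], fun hF1 => ?_⟩
  have hgap : w (Fin.last N).castSucc < w (Fin.last (N + 1)) := hi ▸ hF1 i
  obtain ⟨hrevi, hrevj⟩ := eq_and_eq_of_add_eq_of_add_le hi hj (hk ▸ hij) (hh ▸ hrev)
  exact ⟨hmono.eq_last_of_apply_castSucc_last_lt (hk ▸ hgap),
    hmono.eq_last_of_apply_castSucc_last_lt (hh ▸ hgap), hi.symm, hj.symm, hrevi, hrevj⟩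
end

section
/- Let w₁,…,wₙ be elements of a torsion-free abelian group such that: (G1) if w_i + w_j = w_k with i ≠ j then i < k and j < k; and (G5) if w_i + w_j and w_{n+1-i} + w_{n+1-j} are both weights (values occurring in the sequence), then w_j = w_{n+1-i} and w_i = w_{n+1-j}. Suppose additionally (G2): if w_i + w_{n+1-i} = w_j then j = n. Then whenever w_i + w_j is a weight and w_{î} + w_{ĵ} is a weight (î = n+1−i), we have w_i + w_j = wₙ and wₙ has multiplicity one in the sequence. -/
theorem stmt_13_general (N : ℕ) (A : Type*) [AddCommGroup A]
    (w : Fin (N + 1) → A)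
    (hG5 : ∀ i j : Fin (N + 1), (∃ k, w i + w j = w k) → (∃ k, w i.rev + w j.rev = w k) →
      w j = w i.rev ∧ w i = w j.rev)
    (hG2 : ∀ i j : Fin (N + 1), w i + w i.rev = w j → j = Fin.last N) :
    ∀ i j : Fin (N + 1), (∃ k, w i + w j = w k) → (∃ k, w i.rev + w j.rev = w k) →
      w i + w j = w (Fin.last N) ∧
      ∀ m : Fin (N + 1), w m = w (Fin.last N) → m = Fin.last N := by
  intro i j hij hrev
  obtain ⟨hj, -⟩ := hG5 i j hij hrev
  obtain ⟨k, hk⟩ := hij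
  rw [hj] at hk ⊢
  obtain rfl := hG2 i k hk
  exact ⟨hk, fun m hm => hG2 i m (hk.trans hm.symm)⟩

/-- For a sequence `w₁,…,wₙ` in a torsion-free abelian group satisfying
(G1), (G5) and (G2), whenever `w_i + w_j` and `w_î + w_ĵ` are both weights (values of the
sequence), one has `w_i + w_j = wₙ` and `wₙ` has multiplicity one. (`î = n+1−i`.) -/
theorem stmt_13 (N : ℕ) (A : Type*) [AddCommGroup A] [NoZeroSMulDivisors ℤ A]
    (w : Fin (N + 1) → A)
    (hG1 : ∀ i j k : Fin (N + 1), w i + w j = w k → i ≠ j → i < k ∧ j < k)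
    (hG5 : ∀ i j : Fin (N + 1), (∃ k, w i + w j = w k) → (∃ k, w i.rev + w j.rev = w k) →
      w j = w i.rev ∧ w i = w j.rev)
    (hG2 : ∀ i j : Fin (N + 1), w i + w i.rev = w j → j = Fin.last N) :
    ∀ i j : Fin (N + 1), (∃ k, w i + w j = w k) → (∃ k, w i.rev + w j.rev = w k) →
      w i + w j = w (Fin.last N) ∧
      ∀ m : Fin (N + 1), w m = w (Fin.last N) → m = Fin.last N :=
  stmt_13_general N A w hG5 hG2
end

section
/- Consider the 6-dimensional real nilpotent Lie algebra g with basis e₁,…,e₆ and nonzero brackets [e₁,e₂] = -e₃, [e₁,e₄] = -e₅, [e₁,e₅] = -e₆, [e₂,e₃] = -e₆, [e₂,e₄] = -e₆ (so de³ = e¹∧e², de⁵ = e¹∧e⁴, de⁶ = e¹∧e⁵ + e²∧e³ + e²∧e⁴). Then the diagonal endomorphism D = diag(1/5, 2/5, 3/5, 3/5, 4/5, 1) relative to this basis is a derivation of g. -/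
/-! A diagonal map `D e i = μ i • e i` is a derivation exactly when every bracket `⁅e i, e j⁆` has
weight `μ i + μ j`. With weights `1/5, 2/5, 3/5, 3/5, 4/5, 1` this is the arithmetic
`1/5 + 2/5 = 3/5`, `1/5 + 3/5 = 4/5`, `1/5 + 4/5 = 2/5 + 3/5 = 1` on the five nonzero brackets. -/

section Derivation

variable {R L ι : Type*} [CommRing R] [LieRing L] [LieAlgebra R L]

theorem LinearMap.leibniz_of_basis (b : Module.Basis ι R L) (D : L →ₗ[R] L)
    (h : ∀ i j, D ⁅b i, b j⁆ = ⁅D (b i), b j⁆ + ⁅b i, D (b j)⁆) (x y : L) :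
    D ⁅x, y⁆ = ⁅D x, y⁆ + ⁅x, D y⁆ := by
  let ad : L →ₗ[R] L →ₗ[R] L := LieAlgebra.ad R L
  have hext : ad.compr₂ D = ad ∘ₗ D + ad.compl₂ D :=
    LinearMap.ext_basis b b fun i j => by simpa [ad] using h i j
  simpa [ad] using congr($hext x y)

theorem LinearMap.leibniz_of_eigenbasis (b : Module.Basis ι R L) (D : L →ₗ[R] L) (μ : ι → R)
    (hD : ∀ i, D (b i) = μ i • b i)
    (hgrad : ∀ i j, D ⁅b i, b j⁆ = (μ i + μ j) • ⁅b i, b j⁆) (x y : L) :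
    D ⁅x, y⁆ = ⁅D x, y⁆ + ⁅x, D y⁆ :=
  D.leibniz_of_basis b (fun i j => by rw [hgrad, hD, hD, smul_lie, lie_smul, add_smul]) x y

theorem LinearMap.lie_eigen_of_lt [LinearOrder ι] (b : ι → L) (D : L →ₗ[R] L) (μ : ι → R)
    (h : ∀ i j, i < j → D ⁅b i, b j⁆ = (μ i + μ j) • ⁅b i, b j⁆) (i j : ι) :
    D ⁅b i, b j⁆ = (μ i + μ j) • ⁅b i, b j⁆ := by
  rcases lt_trichotomy i j with hij | rfl | hji
  · exact h i j hij
  · simp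
  · rw [← lie_skew, map_neg, h j i hji, smul_neg, add_comm]

end Derivation

/-- On the 6-dimensional nilpotent Lie algebra
`(0,0,e¹²,e¹³,e¹⁴,e¹⁵+e²³+e²⁴)`, i.e. with nonzero brackets
`[e₁,e₂] = -e₃, [e₁,e₄] = -e₅, [e₁,e₅] = -e₆, [e₂,e₃] = -e₆, [e₂,e₄] = -e₆`
(basis indexed by `Fin 6`, so `e₁ = e 0`, …), the diagonal endomorphism
`D = diag(1/5, 2/5, 3/5, 3/5, 4/5, 1)` is a derivation. -/
theorem stmt_14 (g : Type*) [LieRing g] [LieAlgebra ℝ g]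
    (e : Module.Basis (Fin 6) ℝ g)
    (h12 : ⁅e 0, e 1⁆ = -e 2) (h14 : ⁅e 0, e 3⁆ = -e 4) (h15 : ⁅e 0, e 4⁆ = -e 5)
    (h23 : ⁅e 1, e 2⁆ = -e 5) (h24 : ⁅e 1, e 3⁆ = -e 5)
    (hzero : ∀ i j : Fin 6, i < j →
      (i, j) ∉ ({(0, 1), (0, 3), (0, 4), (1, 2), (1, 3)} : Set (Fin 6 × Fin 6)) →
      ⁅e i, e j⁆ = 0)
    (D : g →ₗ[ℝ] g)
    (hD : ∀ i : Fin 6, D (e i) = (![(1 : ℝ)/5, 2/5, 3/5, 3/5, 4/5, 1] i) • e i) :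
    ∀ x y : g, D ⁅x, y⁆ = ⁅D x, y⁆ + ⁅x, D y⁆ := by
  refine D.leibniz_of_eigenbasis e _ hD (D.lie_eigen_of_lt e _ fun i j hij => ?_)
  by_cases hmem : (i, j) ∈ ({(0, 1), (0, 3), (0, 4), (1, 2), (1, 3)} : Set (Fin 6 × Fin 6))
  · simp only [Set.mem_insert_iff, Set.mem_singleton_iff, Prod.mk.injEq] at hmem
    rcases hmem with ⟨rfl, rfl⟩ | ⟨rfl, rfl⟩ | ⟨rfl, rfl⟩ | ⟨rfl, rfl⟩ | ⟨rfl, rfl⟩ <;>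
      simp [h12, h14, h15, h23, h24, hD] <;> norm_num
  · simp [hzero i j hij hmem]
end

section
/- Let g be the 6-dimensional real nilpotent Lie algebra with de¹ = de² = 0, de³ = e¹∧e², de⁴ = e¹∧e³, de⁵ = e¹∧e⁴, de⁶ = e²∧e⁵ + e³∧e⁴ (a filiform Lie algebra). Then g admits no sequence of positive integers w₁ ≤ ⋯ ≤ w₆ assigned to the basis satisfying simultaneously: (i) w_i + w_j ≤ w_k whenever de^k(e_i,e_j) ≠ 0; (ii) w_i + w_{7-i} ≥ w₆ and w_i + w_{7-i} > w₅ for all i; (iii) if w_i + w_{7-i} = w₆ and w_i ≠ w_{7-i}, then one of w_i, w_{7-i} occurs at least twice in the sequence; (iv) if w_i + w_{7-i} = w₆ with w_i = w_{7-i} and i ≠ 7-i, then w_i occurs more than twice. -/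
/-!
Conditions (i) along the chain `[e₁,e₂] = -e₃, [e₁,e₃] = -e₄, [e₁,e₄] = -e₅` force
`w₂ < w₃ < w₄ < w₅`, so `w₃` and `w₄` each occur exactly once in the sequence. Condition (i)
for `[e₃,e₄] = -e₆` together with (ii) for the pair `(3,4)` gives `w₃ + w₄ = w₆` with `w₃ ≠ w₄`,
and then (iii) demands that one of `w₃, w₄` be repeated.
-/

open Finset

theorem Module.Basis.repr_neg_self_ne_zero {ι R M : Type*} [Ring R] [Nontrivial R]
    [AddCommGroup M] [Module R M] (e : Module.Basis ι R M) (k : ι) : e.repr (-e k) k ≠ 0 := by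
  simp

theorem Monotone.filter_eq_apply_eq_singleton {α β : Type*} [LinearOrder α] [Fintype α]
    [Preorder β] [DecidableEq β] {w : α → β} (hw : Monotone w) {a i b : α}
    (hai : a ⋖ i) (hib : i ⋖ b) (hlt : w a < w i) (hgt : w i < w b) :
    univ.filter (fun m => w m = w i) = {i} := by
  ext m
  simp only [mem_filter, mem_univ, true_and, mem_singleton]
  refine ⟨fun hm => ?_, fun hm => hm ▸ rfl⟩
  rcases lt_trichotomy m i with hmi | hmi | hmi
  · exact absurd hm (hlt.trans_le' (hw (hai.le_of_lt hmi))).ne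
  · exact hmi
  · exact absurd hm (hgt.trans_le (hw (hib.ge_of_gt hmi))).ne'

theorem stmt_15_general (g : Type*) [LieRing g] [LieAlgebra ℝ g]
    (e : Module.Basis (Fin 6) ℝ g)
    (h12 : ⁅e 0, e 1⁆ = -e 2) (h13 : ⁅e 0, e 2⁆ = -e 3) (h14 : ⁅e 0, e 3⁆ = -e 4)
    (h34 : ⁅e 2, e 3⁆ = -e 5) :
    ¬ ∃ w : Fin 6 → ℕ,
      -- (F1): positive nondecreasing weights
      (∀ i, 0 < w i) ∧ Monotone w ∧
      -- (i): w_i + w_j ≤ w_k whenever de^k(e_i,e_j) ≠ 0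
      (∀ i j k : Fin 6, e.repr ⁅e i, e j⁆ k ≠ 0 → w i + w j ≤ w k) ∧
      -- (ii) = (F2): w_i + w_{7-i} ≥ w₆ and w_i + w_{7-i} > w₅
      (∀ i : Fin 6, w 5 ≤ w i + w i.rev ∧ w 4 < w i + w i.rev) ∧
      -- (iii) = (F3)
      (∀ i : Fin 6, w i + w i.rev = w 5 → w i ≠ w i.rev →
        2 ≤ (Finset.univ.filter fun m => w m = w i).card ∨
        2 ≤ (Finset.univ.filter fun m => w m = w i.rev).card) ∧
      -- (iv) = (F4)
      (∀ i : Fin 6, w i + w i.rev = w 5 → w i = w i.rev → i ≠ i.rev →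
        2 < (Finset.univ.filter fun m => w m = w i).card) := by
  rintro ⟨w, hpos, hmono, hbracket, hdual, hrepeat, -⟩
  have h012 := hbracket 0 1 2 (h12 ▸ e.repr_neg_self_ne_zero 2)
  have h023 := hbracket 0 2 3 (h13 ▸ e.repr_neg_self_ne_zero 3)
  have h034 := hbracket 0 3 4 (h14 ▸ e.repr_neg_self_ne_zero 4)
  have h235 := hbracket 2 3 5 (h34 ▸ e.repr_neg_self_ne_zero 5)
  have hsum : w 2 + w 3 = w 5 := le_antisymm h235 (hdual 2).1
  have h0 := hpos 0
  have hsingle2 : univ.filter (fun m => w m = w 2) = {2} :=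
    hmono.filter_eq_apply_eq_singleton (a := 1) (b := 3) (by simp) (by simp) (by omega) (by omega)
  have hsingle3 : univ.filter (fun m => w m = w 3) = {3} :=
    hmono.filter_eq_apply_eq_singleton (a := 2) (b := 4) (by simp) (by simp) (by omega) (by omega)
  have hrepeat23 := hrepeat 2
  rw [show (2 : Fin 6).rev = 3 from rfl, hsingle2, hsingle3] at hrepeat23
  simpa using hrepeat23 hsum (by omega)

/-- The 6-dimensional filiform nilpotent Lie algebra
`(0,0,e¹²,e¹³,e¹⁴,e²⁵+e³⁴)`, with nonzero brackets
`[e₁,e₂] = -e₃, [e₁,e₃] = -e₄, [e₁,e₄] = -e₅, [e₂,e₅] = -e₆, [e₃,e₄] = -e₆`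
(basis indexed by `Fin 6`), admits no sequence of positive integers `w₁ ≤ ⋯ ≤ w₆`
satisfying conditions (F1)–(F4) for the weight assignment induced by this basis order. -/
theorem stmt_15 (g : Type*) [LieRing g] [LieAlgebra ℝ g]
    (e : Module.Basis (Fin 6) ℝ g)
    (h12 : ⁅e 0, e 1⁆ = -e 2) (h13 : ⁅e 0, e 2⁆ = -e 3) (h14 : ⁅e 0, e 3⁆ = -e 4)
    (h25 : ⁅e 1, e 4⁆ = -e 5) (h34 : ⁅e 2, e 3⁆ = -e 5)
    (hzero : ∀ i j : Fin 6, i < j →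
      (i, j) ∉ ({(0, 1), (0, 2), (0, 3), (1, 4), (2, 3)} : Set (Fin 6 × Fin 6)) →
      ⁅e i, e j⁆ = 0) :
    ¬ ∃ w : Fin 6 → ℕ,
      -- (F1): positive nondecreasing weights
      (∀ i, 0 < w i) ∧ Monotone w ∧
      -- (i): w_i + w_j ≤ w_k whenever de^k(e_i,e_j) ≠ 0
      (∀ i j k : Fin 6, e.repr ⁅e i, e j⁆ k ≠ 0 → w i + w j ≤ w k) ∧
      -- (ii) = (F2): w_i + w_{7-i} ≥ w₆ and w_i + w_{7-i} > w₅
      (∀ i : Fin 6, w 5 ≤ w i + w i.rev ∧ w 4 < w i + w i.rev) ∧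
      -- (iii) = (F3)
      (∀ i : Fin 6, w i + w i.rev = w 5 → w i ≠ w i.rev →
        2 ≤ (Finset.univ.filter fun m => w m = w i).card ∨
        2 ≤ (Finset.univ.filter fun m => w m = w i.rev).card) ∧
      -- (iv) = (F4)
      (∀ i : Fin 6, w i + w i.rev = w 5 → w i = w i.rev → i ≠ i.rev →
        2 < (Finset.univ.filter fun m => w m = w i).card) :=
  stmt_15_general g e h12 h13 h14 h34
end

section
/- Let g be a Lie algebra with a grading g = ⊕_α g_α over a torsion-free abelian group and e₁,…,eₙ an adapted basis with weight sequence w₁,…,wₙ satisfying (G1): if w_i + w_j = w_k and i ≠ j then i,j < k. Then relative to the antidiagonal metric Σᵢ e^i ⊗ e^{n+1-i}, the subspace ad g ⊆ g*⊗g is isotropic. -/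
/-!
By (G1), a bracket `⁅e j, e i⁆` with `j ≠ i` lies in the layer of weight `w j + w i`, which
only contains basis vectors `e k` with `i < k`; so every `ad x` is strictly lower triangular in
the adapted basis. The reversal `k ↦ k.rev` turns strictly lower triangular into strictly upper
triangular, hence in each term `(ad x)_{k i} (ad y)_{k̂ î}` one of the two factors vanishes.
-/

open Finset

namespace Module.Basis

variable {R M ι A : Type*} [Ring R] [AddCommGroup M] [Module R M] [Fintype ι]

theorem repr_eq_zero_of_mem_of_weight_ne {gr : A → Submodule R M} (hind : iSupIndep gr)
    (e : Basis ι R M) {w : ι → A} (hadapted : ∀ i, e i ∈ gr (w i))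
    {v : M} {α : A} (hv : v ∈ gr α) {k : ι} (hk : w k ≠ α) :
    e.repr v k = 0 := by
  classical
  set s := univ.filter fun i => w i ≠ α
  set r := ∑ i ∈ s, e.repr v i • e i
  have hr_mem : r ∈ gr α := by
    have hvr : v - r = ∑ i ∈ univ.filter (fun i => w i = α), e.repr v i • e i := by
      conv_lhs => rw [← e.sum_repr v, ← sum_filter_add_sum_filter_not univ (fun i => w i = α)]
      simp only [r, s, ne_eq, add_sub_cancel_right]
    have : v - r ∈ gr α :=
      hvr ▸ Submodule.sum_mem _ fun i hi =>
        Submodule.smul_mem _ _ ((mem_filter.mp hi).2 ▸ hadapted i)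
    simpa using Submodule.sub_mem _ hv this
  have hr_mem_sup : r ∈ ⨆ β ∈ {β | β ≠ α}, gr β :=
    Submodule.sum_mem _ fun i hi => Submodule.smul_mem _ _ <|
      Submodule.mem_iSup_of_mem (w i) (Submodule.mem_iSup_of_mem (mem_filter.mp hi).2 (hadapted i))
  have hr : r = 0 := (hind.disjoint_biSup (by simp)).le_bot ⟨hr_mem, hr_mem_sup⟩
  exact linearIndependent_iff'.mp e.linearIndependent s _ hr k (by simp [s, hk])

end Module.Basis

theorem repr_lie_basis_eq_zero_of_not_lt {R g ι A : Type*} [CommRing R] [LieRing g]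
    [LieAlgebra R g] [Fintype ι] [LinearOrder ι] [AddCommGroup A]
    {gr : A → Submodule R g} (hind : iSupIndep gr)
    (hbr : ∀ α β : A, ∀ x ∈ gr α, ∀ y ∈ gr β, ⁅x, y⁆ ∈ gr (α + β))
    (e : Module.Basis ι R g) {w : ι → A} (hadapted : ∀ i, e i ∈ gr (w i))
    (hG1 : ∀ i j k, w i + w j = w k → i ≠ j → i < k ∧ j < k)
    (x : g) {i k : ι} (hik : ¬ i < k) :
    e.repr ⁅x, e i⁆ k = 0 := by
  conv_lhs => rw [← e.sum_repr x]
  simp only [sum_lie, smul_lie, map_sum, map_smul, Finsupp.coe_finsetSum, Finset.sum_apply,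
    Finsupp.smul_apply, smul_eq_mul]
  refine sum_eq_zero fun j _ => ?_
  rcases eq_or_ne j i with rfl | hji
  · simp
  · have hweight : w j + w i ≠ w k := fun h => hik (hG1 j i k h hji).2
    rw [e.repr_eq_zero_of_mem_of_weight_ne hind hadapted
      (hbr _ _ _ (hadapted j) _ (hadapted i)) hweight.symm, mul_zero]

theorem sum_mul_rev_eq_zero_of_strictLower {R : Type*} [CommSemiring R] {n : ℕ}
    {a b : Fin n → Fin n → R} (ha : ∀ i k, ¬ i < k → a k i = 0)
    (hb : ∀ i k, ¬ i < k → b k i = 0) :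
    ∑ i, ∑ k, a k i * b k.rev i.rev = 0 := by
  refine sum_eq_zero fun i _ => sum_eq_zero fun k _ => ?_
  by_cases hik : i < k
  · rw [hb i.rev k.rev (by simpa using hik.le), mul_zero]
  · rw [ha i k hik, zero_mul]

theorem stmt_18_general (A : Type*) [AddCommGroup A] [DecidableEq A]
    (n : ℕ) (g : Type*) [LieRing g] [LieAlgebra ℝ g]
    (gr : A → Submodule ℝ g)
    (hinternal : DirectSum.IsInternal gr)
    (hbr : ∀ α β : A, ∀ x ∈ gr α, ∀ y ∈ gr β, ⁅x, y⁆ ∈ gr (α + β))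
    (e : Module.Basis (Fin n) ℝ g) (w : Fin n → A)
    (hadapted : ∀ i : Fin n, e i ∈ gr (w i))
    (hG1 : ∀ i j k : Fin n, w i + w j = w k → i ≠ j → i < k ∧ j < k) :
    ∀ x y : g,
      ∑ i : Fin n, ∑ k : Fin n,
        e.repr ⁅x, e i⁆ k * e.repr ⁅y, e i.rev⁆ k.rev = 0 := by
  have hind := hinternal.submodule_iSupIndep
  intro x y
  exact sum_mul_rev_eq_zero_of_strictLower
    (fun _ _ => repr_lie_basis_eq_zero_of_not_lt hind hbr e hadapted hG1 x)
    (fun _ _ => repr_lie_basis_eq_zero_of_not_lt hind hbr e hadapted hG1 y)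

/-- For a Lie algebra graded over a torsion-free abelian group with an
adapted basis whose weight sequence satisfies (G1) (`w_i + w_j = w_k` and `i ≠ j` imply
`i, j < k`), the subspace `ad g ⊆ g*⊗g` is isotropic for the scalar product induced by
the antidiagonal metric `Σ eⁱ ⊗ e^{n+1-i}`: concretely,
`⟨ad x, ad y⟩ = Σ_{i,k} (ad x)_{k i} (ad y)_{k̂ î} = 0` where `î = n+1-i`. -/
theorem stmt_18 (A : Type*) [AddCommGroup A] [NoZeroSMulDivisors ℤ A] [DecidableEq A]
    (n : ℕ) (g : Type*) [LieRing g] [LieAlgebra ℝ g]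
    (gr : A → Submodule ℝ g)
    (hinternal : DirectSum.IsInternal gr)
    (hbr : ∀ α β : A, ∀ x ∈ gr α, ∀ y ∈ gr β, ⁅x, y⁆ ∈ gr (α + β))
    (e : Module.Basis (Fin n) ℝ g) (w : Fin n → A)
    (hadapted : ∀ i : Fin n, e i ∈ gr (w i))
    (hG1 : ∀ i j k : Fin n, w i + w j = w k → i ≠ j → i < k ∧ j < k) :
    ∀ x y : g,
      ∑ i : Fin n, ∑ k : Fin n,
        e.repr ⁅x, e i⁆ k * e.repr ⁅y, e i.rev⁆ k.rev = 0 :=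
  stmt_18_general A n g gr hinternal hbr e w hadapted hG1
end
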